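/- Let G be a block graph. Then the set W(G) of weight centers of G is contained in a single block of G; in particular, any two distinct weight centers of G are adjacent in G. -/

import Mathlib

open scoped Classical

namespace RadioLabeling

variable {V : Type*} [Fintype V]

/-- The diameter of a graph: maximum distance between two vertices. -/
noncomputable def diam (G : SimpleGraph V) : ℕ :=
  Finset.univ.sup fun p : V × V => G.dist p.1 p.2

/-- A vertex set `S` induces a 2-connected subgraph: the induced subgraph is connected
and contains no cut-vertex. -/
def TwoConn (G : SimpleGraph V) (S : Set V) : Prop :=
  (G.induce S).Connected ∧ ∀ v ∈ S, (S \ {v} : Set V) = ∅ ∨ (G.induce (S \ {v})).Connected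

/-- A block: a maximal 2-connected induced subgraph. -/
def IsBlock (G : SimpleGraph V) (S : Set V) : Prop :=
  TwoConn G S ∧ ∀ T : Set V, S ⊆ T → TwoConn G T → T = S

/-- A block graph: a connected graph each of whose blocks is a clique. -/
def IsBlockGraph (G : SimpleGraph V) : Prop :=
  G.Connected ∧ ∀ S : Set V, IsBlock G S → G.IsClique S

/-- The weight of `G` at `v`: the sum of distances from `v` to all vertices. -/
noncomputable def wt (G : SimpleGraph V) (v : V) : ℕ := ∑ u : V, G.dist u v

/-- The set of weight centers: vertices minimizing the weight. -/
def weightCenters (G : SimpleGraph V) : Set V := {v | ∀ u : V, wt G v ≤ wt G u}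

/-- `nCloser G v u` = number of vertices strictly closer to `v` than to `u`. -/
noncomputable def nCloser (G : SimpleGraph V) (v u : V) : ℕ :=
  (Finset.univ.filter fun z => G.dist v z < G.dist u z).card

/-- A central vertex: either the unique weight center, or (when there are at least two
weight centers) a vertex of the central block, i.e. of a block containing all weight centers. -/
def IsCentral (G : SimpleGraph V) (w : V) : Prop :=
  weightCenters G = {w} ∨
    (2 ≤ (weightCenters G).ncard ∧
      ∃ S : Set V, IsBlock G S ∧ weightCenters G ⊆ S ∧ w ∈ S)

/-- The level of a vertex: its distance to a nearest central vertex. -/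
noncomputable def level (G : SimpleGraph V) (v : V) : ℕ :=
  sInf {n | ∃ w, IsCentral G w ∧ G.dist v w = n}

/-- The total level of `G`. -/
noncomputable def totalLevel (G : SimpleGraph V) : ℕ := ∑ v : V, level G v

/-- `eps G = 1` if `G` has a unique weight center, `0` otherwise. -/
noncomputable def eps (G : SimpleGraph V) : ℕ :=
  if (weightCenters G).ncard = 1 then 1 else 0

/-- A radio labeling: `|f u - f v| ≥ diam G + 1 - dist u v` for all distinct `u`, `v`. -/
def IsRadioLabeling (G : SimpleGraph V) (f : V → ℕ) : Prop :=
  ∀ u v : V, u ≠ v → diam G + 1 ≤ G.dist u v + max (f u - f v) (f v - f u)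

/-- The span of a labeling: the maximum difference of two labels. -/
noncomputable def span (f : V → ℕ) : ℕ :=
  Finset.univ.sup fun p : V × V => f p.1 - f p.2

/-- The radio number: minimum span of a radio labeling. -/
noncomputable def rn (G : SimpleGraph V) : ℕ :=
  sInf {s | ∃ f : V → ℕ, IsRadioLabeling G f ∧ span f = s}

/-- `G` achieves the lower bound `(p-1)(d(G)+ε(G)) - 2L(G) + ε(G)` for the radio number. -/
def lbEq (G : SimpleGraph V) : Prop :=
  (rn G : ℤ) =
    ((Fintype.card V : ℤ) - 1) * ((diam G : ℤ) + (eps G : ℤ)) -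
      2 * (totalLevel G : ℤ) + (eps G : ℤ)

/-- A lower bound block graph: a block graph whose radio number equals the lower bound. -/
def IsLowerBoundBlockGraph (G : SimpleGraph V) : Prop := IsBlockGraph G ∧ lbEq G

/-- `x` lies on a `(u,v)`-geodesic. -/
def OnGeodesic (G : SimpleGraph V) (x u v : V) : Prop :=
  G.dist u v = G.dist u x + G.dist x v

/-- `x` is an ancestor of `v` (and `v` a descendent of `x`): `x` lies on the geodesic
from some central vertex to `v`. -/
def IsAncestor (G : SimpleGraph V) (x v : V) : Prop :=
  ∃ w : V, IsCentral G w ∧ OnGeodesic G x w v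

/-- `phi G u v`: the maximum level of a common ancestor of `u` and `v`. -/
noncomputable def phi (G : SimpleGraph V) (u v : V) : ℕ :=
  sSup {n | ∃ x, IsAncestor G x u ∧ IsAncestor G x v ∧ level G x = n}

/-- `delta G u v = 1` iff the `(u,v)`-geodesic contains two central vertices. -/
noncomputable def delta (G : SimpleGraph V) (u v : V) : ℕ :=
  if ∃ x y : V, x ≠ y ∧ IsCentral G x ∧ IsCentral G y ∧
      OnGeodesic G x u v ∧ OnGeodesic G y u v
    then 1 else 0

/-- `rho G u v = 0` iff the `(u,v)`-geodesic contains a central vertex or a common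
ancestor of `u` and `v`. -/
noncomputable def rho (G : SimpleGraph V) (u v : V) : ℕ :=
  if ∃ x : V, OnGeodesic G x u v ∧
      (IsCentral G x ∨ (IsAncestor G x u ∧ IsAncestor G x v))
    then 0 else 1

/-- The central block: a block containing at least two weight centers, all of them. -/
def IsCentralBlock (G : SimpleGraph V) (D : Set V) : Prop :=
  IsBlock G D ∧ 2 ≤ (weightCenters G).ncard ∧ weightCenters G ⊆ D

/-- `v` belongs to the branch of `G` determined by the non-central block `D` adjacent to the
central vertex `w`: `v` is a vertex of `D` other than `w`, or a descendent of such a vertex. -/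
def InBranch (G : SimpleGraph V) (w : V) (D : Set V) (v : V) : Prop :=
  IsCentral G w ∧ IsBlock G D ∧ w ∈ D ∧ ¬ IsCentralBlock G D ∧
    ∃ u ∈ D, u ≠ w ∧ IsAncestor G u v

/-- Two vertices are in different branches: branches induced by two different blocks
adjacent to the same central vertex. -/
def DifferentBranches (G : SimpleGraph V) (u v : V) : Prop :=
  ∃ w D₁ D₂, D₁ ≠ D₂ ∧ InBranch G w D₁ u ∧ InBranch G w D₂ v

/-- Two vertices are in opposite branches: branches induced by blocks adjacent to two
different central vertices. -/
def OppositeBranches (G : SimpleGraph V) (u v : V) : Prop :=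
  ∃ w₁ w₂ D₁ D₂, w₁ ≠ w₂ ∧ InBranch G w₁ D₁ u ∧ InBranch G w₂ D₂ v

/-- Two vertices lie in the same branch. -/
def SameBranch (G : SimpleGraph V) (u v : V) : Prop :=
  ∃ w D, InBranch G w D u ∧ InBranch G w D v

end RadioLabeling

/-! In a block graph, the neighbour `c` of `x` on a geodesic to `y` separates `x` from `y`:
an `x`–`y` path avoiding `c`, together with a geodesic from `c` towards `y`, would close a cycle
through `x` and a vertex at distance at least `2` from `x`; but a cycle is 2-connected, hence
lies in a block, which is a clique. So every vertex at least as close to `x` as to `c` reaches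
`y` through `c`. At a weight center `x`, at least half of the vertices are at least as close to
`x` as to any given neighbour. For non-adjacent weight centers `x` and `y` the two halves
obtained this way, from `x` towards `y` and from `y` towards `x`, are disjoint and both miss `c`,
which is impossible. Hence the weight centers form a clique, which is 2-connected and therefore
lies in a block. -/

namespace SimpleGraph

variable {V : Type*} {G : SimpleGraph V}

lemma connected_induce_of_forall_exists_walk {s : Set V} {u : V} (hu : u ∈ s)
    (h : ∀ a ∈ s, ∃ p : G.Walk u a, ∀ w ∈ p.support, w ∈ s) : (G.induce s).Connected :=
  G.induce_connected_of_patches u hu fun {a} ha =>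
    let ⟨p, hp⟩ := h a ha
    ⟨_, hp, p.start_mem_support, p.end_mem_support, p.connected_induce_support.preconnected _ _⟩

lemma connected_induce_of_isClique {s : Set V} {u : V} (hu : u ∈ s) (hs : G.IsClique s) :
    (G.induce s).Connected := by
  refine connected_induce_of_forall_exists_walk hu fun a ha => ?_
  by_cases hua : u = a
  · subst hua
    exact ⟨.nil, by simpa using hu⟩
  · exact ⟨(hs hu ha hua).toWalk, by simp [hu, ha]⟩

lemma Reachable.exists_adj_dist_add_one {u v : V} (h : G.Reachable u v) (huv : u ≠ v) :
    ∃ c, G.Adj u c ∧ G.dist c v + 1 = G.dist u v := by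
  obtain ⟨p, hp⟩ := h.exists_walk_length_eq_dist
  cases p with
  | nil => exact absurd rfl huv
  | @cons _ c _ hadj q =>
    have hq : G.dist c v ≤ q.length := dist_le q
    have htri : G.dist u v ≤ G.dist u c + G.dist c v := hadj.reachable.dist_triangle_left v
    have huc : G.dist u c = 1 := dist_eq_one_iff_adj.2 hadj
    rw [Walk.length_cons] at hp
    exact ⟨c, hadj, by omega⟩

namespace Walk

lemma dist_add_dist_le_length {u v a : V} (p : G.Walk u v) (ha : a ∈ p.support) :
    G.dist u a + G.dist a v ≤ p.length :=
  calc G.dist u a + G.dist a v ≤ (p.takeUntil a ha).length + (p.dropUntil a ha).length :=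
        add_le_add (dist_le _) (dist_le _)
    _ = p.length := by rw [← length_append, take_spec]

lemma IsPath.notMem_support_takeUntil_or_dropUntil {u v a b : V} {p : G.Walk u v}
    (hp : p.IsPath) (ha : a ∈ p.support) (hba : b ≠ a) :
    b ∉ (p.takeUntil a ha).support ∨ b ∉ (p.dropUntil a ha).support := by
  have hnd := hp.support_nodup
  rw [← p.take_spec ha, support_append] at hnd
  by_contra! ⟨htake, hdrop⟩
  rw [← cons_tail_support, List.mem_cons] at hdrop
  exact List.disjoint_of_nodup_append hnd htake (hdrop.resolve_left hba)

lemma IsPath.exists_walk_avoiding {x m a v : V} {s : Set V} {P : G.Walk x m} (hP : P.IsPath)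
    (hPs : ∀ b ∈ P.support, b ∈ s) (ha : a ∈ P.support) (hav : a ≠ v) :
    (∃ q : G.Walk x a, ∀ b ∈ q.support, b ∈ s \ {v}) ∨
      ∃ q : G.Walk m a, ∀ b ∈ q.support, b ∈ s \ {v} := by
  have avoid {u w : V} (q : G.Walk u w) (hqP : q.support ⊆ P.support) (hvq : v ∉ q.support) :
      ∀ b ∈ q.support, b ∈ s \ {v} := fun b hb => ⟨hPs b (hqP hb), fun hbv => hvq (hbv ▸ hb)⟩
  rcases hP.notMem_support_takeUntil_or_dropUntil ha hav.symm with h | h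
  · exact .inl ⟨_, avoid _ (P.support_takeUntil_subset_support ha) h⟩
  · refine .inr ⟨(P.dropUntil a ha).reverse, avoid _ ?_ (by simpa using h)⟩
    simpa using P.support_dropUntil_subset_support ha

lemma exists_append_eq_first_mem {u v : V} (p : G.Walk u v) {s : Set V} (hv : v ∈ s) :
    ∃ m ∈ s, ∃ (q : G.Walk u m) (r : G.Walk m v), q.append r = p ∧
      ∀ b ∈ q.support, b ∈ s → b = m := by
  induction p with
  | nil => exact ⟨_, hv, nil, nil, rfl, by simp⟩
  | @cons u w v huw p ih =>
    by_cases hu : u ∈ s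
    · exact ⟨u, hu, nil, cons huw p, rfl, by simp⟩
    · obtain ⟨m, hm, q, r, rfl, hfirst⟩ := ih hv
      refine ⟨m, hm, cons huw q, r, rfl, ?_⟩
      simp only [support_cons, List.mem_cons, forall_eq_or_imp]
      exact ⟨fun h => absurd h hu, hfirst⟩

end Walk

end SimpleGraph

namespace RadioLabeling

open SimpleGraph Finset

section

variable {V : Type*} {G : SimpleGraph V}

lemma twoConn_of_isClique {S : Set V} (hne : S.Nonempty) (hS : G.IsClique S) : TwoConn G S := by
  obtain ⟨u, hu⟩ := hne
  refine ⟨connected_induce_of_isClique hu hS, fun v _ => ?_⟩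
  rcases (S \ {v}).eq_empty_or_nonempty with h | ⟨w, hw⟩
  · exact .inl h
  · exact .inr (connected_induce_of_isClique hw (hS.subset Set.sdiff_subset))

lemma exists_isBlock_superset [Finite V] {S : Set V} (hS : TwoConn G S) :
    ∃ T, IsBlock G T ∧ S ⊆ T := by
  obtain ⟨T, hST, hT⟩ := Finite.exists_le_maximal hS
  exact ⟨T, ⟨hT.prop, fun U hTU hU => hT.eq_of_superset hU hTU⟩, hST⟩

lemma twoConn_union_support_of_isPath {x m : V} {P₁ P₂ : G.Walk x m} (h₁ : P₁.IsPath)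
    (h₂ : P₂.IsPath) (hxm : x ≠ m) (hdisj : ∀ a ∈ P₁.support, a ∈ P₂.support → a = x ∨ a = m) :
    TwoConn G {a | a ∈ P₁.support ∨ a ∈ P₂.support} := by
  set S : Set V := {a | a ∈ P₁.support ∨ a ∈ P₂.support}
  refine ⟨connected_induce_of_forall_exists_walk (Or.inl P₁.start_mem_support) fun a ha => ?_,
    fun v _ => .inr ?_⟩
  · rcases ha with ha | ha
    · exact ⟨P₁.takeUntil a ha, fun w hw => .inl (P₁.support_takeUntil_subset_support ha hw)⟩
    · exact ⟨P₂.takeUntil a ha, fun w hw => .inr (P₂.support_takeUntil_subset_support ha hw)⟩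
  have hsegment : ∀ a ∈ S \ {v}, (∃ q : G.Walk x a, ∀ b ∈ q.support, b ∈ S \ {v}) ∨
      (∃ q : G.Walk m a, ∀ b ∈ q.support, b ∈ S \ {v}) := by
    rintro a ⟨ha | ha, hav⟩
    · exact h₁.exists_walk_avoiding (fun b => .inl) ha hav
    · exact h₂.exists_walk_avoiding (fun b => .inr) ha hav
  by_cases hvx : v = x
  · subst hvx
    refine connected_induce_of_forall_exists_walk ⟨Or.inl P₁.end_mem_support, hxm.symm⟩
      fun a ha => (hsegment a ha).resolve_left fun ⟨q, hq⟩ => ?_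
    exact (hq _ q.start_mem_support).2 rfl
  · refine connected_induce_of_forall_exists_walk ⟨Or.inl P₁.start_mem_support, Ne.symm hvx⟩
      fun a ha => (hsegment a ha).elim id fun ⟨q, hq⟩ => ?_
    have hvm : v ≠ m := fun hvm => (hq _ q.start_mem_support).2 hvm.symm
    -- `v` is an inner vertex of at most one of the two paths
    obtain ⟨P, hP⟩ : ∃ P : G.Walk x m, ∀ b ∈ P.support, b ∈ S \ {v} := by
      by_cases hv₁ : v ∈ P₁.support
      · have hv₂ : v ∉ P₂.support := fun hv₂ => (hdisj v hv₁ hv₂).elim hvx hvm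
        exact ⟨P₂, fun b hb => ⟨.inr hb, fun hbv => hv₂ (hbv ▸ hb)⟩⟩
      · exact ⟨P₁, fun b hb => ⟨.inl hb, fun hbv => hv₁ (hbv ▸ hb)⟩⟩
    refine ⟨P.append q, fun b hb => ?_⟩
    rcases (Walk.mem_support_append_iff _ _).1 hb with hb | hb
    · exact hP b hb
    · exact hq b hb

lemma IsBlockGraph.isClique_of_twoConn [Finite V] (hG : IsBlockGraph G) {S : Set V}
    (hS : TwoConn G S) : G.IsClique S := by
  obtain ⟨T, hT, hST⟩ := exists_isBlock_superset hS
  exact (hG.2 T hT).subset hST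

lemma IsBlockGraph.mem_support_of_adj_of_dist_add_one [Finite V] (hG : IsBlockGraph G)
    {x c y : V} (hxc : G.Adj x c) (hcy : G.dist c y + 1 = G.dist x y) (W : G.Walk x y) :
    c ∈ W.support := by
  by_contra hcW
  obtain ⟨P, hP, hcP⟩ : ∃ P : G.Walk x y, P.IsPath ∧ c ∉ P.support :=
    ⟨W.bypass, W.bypass_isPath, fun h => hcW (W.support_bypass_subset_support h)⟩
  have hcx : G.dist c x = 1 := dist_eq_one_iff_adj.2 hxc.symm
  obtain ⟨Q, hQ, hQlen⟩ := hG.1.exists_path_of_dist c y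
  have hxQ : x ∉ Q.support := fun h => by
    have := Q.dist_add_dist_le_length h
    omega
  obtain ⟨m, hmP, q, r, rfl, hfirst⟩ :=
    Q.exists_append_eq_first_mem (s := {b | b ∈ P.support}) P.end_mem_support
  have hxq : x ∉ q.support := fun h => hxQ ((Walk.mem_support_append_iff _ _).2 (.inl h))
  have hmx : x ≠ m := fun h => hxq (h ▸ q.end_mem_support)
  have hcm : 0 < G.dist c m := hG.1.pos_dist_of_ne fun h => hcP (h ▸ hmP)
  have hmy : G.dist c m + G.dist m y ≤ G.dist c y := by
    have := dist_le q
    have := dist_le r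
    rw [Walk.length_append] at hQlen
    omega
  -- `P` up to `m`, and the edge `x c` followed by `q`, are internally disjoint `x`–`m` paths
  have hxm : G.Adj x m := by
    refine hG.isClique_of_twoConn (twoConn_union_support_of_isPath
      (P₁ := P.takeUntil m hmP) (P₂ := .cons hxc q) (hP.takeUntil hmP)
      (hQ.of_append_left.cons hxq) hmx ?_)
      (.inl (Walk.start_mem_support _)) (.inl (Walk.end_mem_support _)) hmx
    intro a haP haq
    rw [Walk.support_cons, List.mem_cons] at haq
    exact haq.imp id fun haq => hfirst a haq (P.support_takeUntil_subset_support hmP haP)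
  have := hG.1.dist_triangle (u := x) (v := m) (w := y)
  have := dist_eq_one_iff_adj.2 hxm
  omega

lemma IsBlockGraph.dist_eq_dist_add_dist [Finite V] (hG : IsBlockGraph G) {x c y z : V}
    (hxc : G.Adj x c) (hcy : G.dist c y + 1 = G.dist x y) (hz : G.dist z x ≤ G.dist z c) :
    G.dist z y = G.dist z c + G.dist c y := by
  obtain ⟨p, hp⟩ := hG.1.exists_walk_length_eq_dist z x
  obtain ⟨q, hq⟩ := hG.1.exists_walk_length_eq_dist z y
  have hc := hG.mem_support_of_adj_of_dist_add_one hxc hcy (p.reverse.append q)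
  rw [Walk.mem_support_append_iff, Walk.support_reverse, List.mem_reverse] at hc
  refine le_antisymm hG.1.dist_triangle ?_
  rcases hc with hc | hc
  · have := p.dist_add_dist_le_length hc
    have := dist_eq_one_iff_adj.2 hxc.symm
    omega
  · exact hq ▸ q.dist_add_dist_le_length hc

end

section

variable {V : Type*} [Fintype V] {G : SimpleGraph V}

lemma card_le_two_mul_card_filter_dist_le {x c : V} (hxc : G.Adj x c) (hwt : wt G x ≤ wt G c) :
    Fintype.card V ≤ 2 * #{z | G.dist z x ≤ G.dist z c} := by
  have hterm : ∀ z, (G.dist z c : ℤ) - G.dist z x ≤ if G.dist z x ≤ G.dist z c then 1 else -1 := by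
    intro z
    rcases hxc.diff_dist_adj (u := z) with h | h | h <;> split_ifs <;> omega
  have hsum : (0 : ℤ) ≤ ∑ z, ((G.dist z c : ℤ) - G.dist z x) := by
    rw [sum_sub_distrib, sub_nonneg]
    exact_mod_cast hwt
  have hcount := sum_le_sum fun z (_ : z ∈ univ) => hterm z
  rw [sum_ite, sum_const, sum_const] at hcount
  have := card_filter_add_card_filter_not (s := univ) (fun z => G.dist z x ≤ G.dist z c)
  simp only [card_univ] at this
  simp only [nsmul_eq_mul, mul_one, mul_neg] at hcount
  omega

lemma IsBlockGraph.card_le_two_mul_card_filter (hG : IsBlockGraph G) {x c y : V}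
    (hx : x ∈ weightCenters G) (hxc : G.Adj x c) (hcy : G.dist c y + 1 = G.dist x y) :
    Fintype.card V ≤ 2 * #{z | G.dist z x + G.dist x y ≤ G.dist z y + 1} := by
  refine (card_le_two_mul_card_filter_dist_le hxc (hx c)).trans
    (Nat.mul_le_mul_left 2 (card_le_card (monotone_filter_right _ fun z _ hz => ?_)))
  have := hG.dist_eq_dist_add_dist hxc hcy hz
  omega

lemma IsBlockGraph.adj_of_mem_weightCenters (hG : IsBlockGraph G) {x y : V}
    (hx : x ∈ weightCenters G) (hy : y ∈ weightCenters G) (hxy : x ≠ y) : G.Adj x y := by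
  by_contra hnadj
  have hdist : 1 < G.dist x y := hG.1.one_lt_dist_of_ne_of_not_adj hxy hnadj
  have hyx : G.dist y x = G.dist x y := dist_comm
  obtain ⟨c, hxc, hcy⟩ := (hG.1 x y).exists_adj_dist_add_one hxy
  have hcx : G.dist c x = 1 := dist_eq_one_iff_adj.2 hxc.symm
  obtain ⟨c', hyc', hc'x⟩ := (hG.1 y x).exists_adj_dist_add_one hxy.symm
  have hX := hG.card_le_two_mul_card_filter hx hxc hcy
  have hY := hG.card_le_two_mul_card_filter hy hyc' hc'x
  have hdisj : Disjoint (univ.filter fun z => G.dist z x + G.dist x y ≤ G.dist z y + 1)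
      (univ.filter fun z => G.dist z y + G.dist y x ≤ G.dist z x + 1) :=
    disjoint_filter.2 fun z _ h₁ h₂ => by omega
  have hc : c ∉ (univ.filter fun z => G.dist z x + G.dist x y ≤ G.dist z y + 1) ∪
      (univ.filter fun z => G.dist z y + G.dist y x ≤ G.dist z x + 1) := by
    simp only [mem_union, mem_filter, mem_univ, true_and]
    omega
  have := card_lt_univ_of_notMem hc
  rw [card_union_of_disjoint hdisj] at this
  omega

lemma weightCenters_nonempty [Nonempty V] : (weightCenters G).Nonempty := by
  obtain ⟨w, -, hw⟩ := univ.exists_min_image (wt G) univ_nonempty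
  exact ⟨w, fun u => hw u (mem_univ u)⟩

/-- In a block graph the set of weight centers is contained in a single block;
in particular any two distinct weight centers are adjacent. -/
theorem stmt2 {V : Type*} [Fintype V] (G : SimpleGraph V) (hG : IsBlockGraph G) :
    (∃ S : Set V, IsBlock G S ∧ weightCenters G ⊆ S) ∧
      ∀ x ∈ weightCenters G, ∀ y ∈ weightCenters G, x ≠ y → G.Adj x y := by
  have hadj : G.IsClique (weightCenters G) := fun x hx y hy hxy =>
    hG.adj_of_mem_weightCenters hx hy hxy
  have : Nonempty V := hG.1.nonempty
  exact ⟨exists_isBlock_superset (twoConn_of_isClique weightCenters_nonempty hadj), hadj⟩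

end

end RadioLabeling
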